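/- Let μ ∈ ℂ and ℓ, d ∈ ℕ. Then for every f ∈ ℂ[t]: (1) S_ℓ^μ f − S_ℓ^{μ+d} f = 2d·(ϑ_t f − ℓ·f); (2) S_ℓ^μ f − S_{ℓ−2d}^{μ+d} f = 2d·(ϑ_t f + (2μ+ℓ)·f). (3) If moreover 2μ + ℓ = 0, then for all n, d ∈ ℕ with 2d ≤ n: S_{ℓ+n}^{μ−n} t^{n−2d} = −2d(ℓ+2d)·t^{n−2d} − (n−2d)(n−2d−1)·t^{n−2d−2}, where the last term is interpreted as 0 when n−2d ≤ 1. -/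
import Mathlib


noncomputable section

/-- The imaginary Gegenbauer operator `S_ℓ^μ` on `ℂ[t]`. -/
def Sop (μ : ℂ) (l : ℤ) (f : Polynomial ℂ) : Polynomial ℂ :=
  -((1 + Polynomial.X ^ 2) * f.derivative.derivative)
    - Polynomial.C (1 + 2 * μ) * (Polynomial.X * f.derivative)
    + Polynomial.C ((l : ℂ) * ((l : ℂ) + 2 * μ)) * f

open Polynomial in
lemma sop_aux (μ : ℂ) (l : ℕ) (h : (l : ℂ) = -(2 * μ)) (m d' : ℕ) :
    Sop (μ - ((m : ℂ) + 2 * d')) ((l : ℤ) + ((m : ℤ) + 2 * d')) (X ^ m) =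
      C (-(2 * (d' : ℂ)) * ((l : ℂ) + 2 * (d' : ℂ))) * X ^ m -
        C ((m : ℂ) * ((m - 1 : ℕ) : ℂ)) * X ^ (m - 2) := by
  match m with
  | 0 =>
    simp only [Sop, pow_zero, derivative_one, derivative_zero, Nat.zero_sub,
      map_add, map_mul, map_sub, map_neg, map_one, map_ofNat, map_zero, Nat.cast_zero, Nat.cast_one,
      Int.cast_add, Int.cast_natCast, Int.cast_mul, Int.cast_ofNat, Nat.cast_zero]
    push_cast
    rw [h]
    simp only [map_neg, map_mul, map_add, map_ofNat, map_zero, map_one]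
    ring
  | 1 =>
    simp only [Sop, pow_one, derivative_X, derivative_one,
      map_add, map_mul, map_sub, map_neg, map_one, map_ofNat, map_zero, Nat.cast_zero, Nat.cast_one,
      Int.cast_add, Int.cast_natCast, Int.cast_mul, Int.cast_ofNat]
    push_cast
    rw [h]
    simp only [map_neg, map_mul, map_add, map_ofNat, map_zero, map_one]
    ring
  | (m + 2) =>
    simp only [Sop, derivative_X_pow, show m + 2 - 1 = m + 1 from rfl,
      show m + 2 - 2 = m from rfl, show m + 1 - 1 = m from rfl,
      derivative_mul, derivative_C, derivative_X_pow, zero_mul, zero_add,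
      map_add, map_mul, map_sub, map_neg, map_one, map_ofNat, map_zero, Nat.cast_zero, Nat.cast_one,
      Int.cast_add, Int.cast_natCast, Int.cast_mul, Int.cast_ofNat]
    push_cast
    rw [h]
    simp only [map_neg, map_mul, map_add, map_ofNat, map_zero, map_one]
    ring

/-- algebraic identities for the imaginary Gegenbauer operator. -/
theorem statement19 (μ : ℂ) (l d : ℕ) :
    (∀ f : Polynomial ℂ,
      Sop μ (l : ℤ) f - Sop (μ + (d : ℂ)) (l : ℤ) f =
        Polynomial.C (2 * (d : ℂ)) *
          (Polynomial.X * f.derivative - Polynomial.C ((l : ℂ)) * f)) ∧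
    (∀ f : Polynomial ℂ,
      Sop μ (l : ℤ) f - Sop (μ + (d : ℂ)) ((l : ℤ) - 2 * (d : ℤ)) f =
        Polynomial.C (2 * (d : ℂ)) *
          (Polynomial.X * f.derivative + Polynomial.C (2 * μ + (l : ℂ)) * f)) ∧
    (2 * μ + (l : ℂ) = 0 →
      ∀ n d' : ℕ, 2 * d' ≤ n →
        Sop (μ - (n : ℂ)) ((l : ℤ) + (n : ℤ)) (Polynomial.X ^ (n - 2 * d')) =
          Polynomial.C (-(2 * (d' : ℂ)) * ((l : ℂ) + 2 * (d' : ℂ))) *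
              Polynomial.X ^ (n - 2 * d') -
            Polynomial.C (((n - 2 * d' : ℕ) : ℂ) * ((n - 2 * d' - 1 : ℕ) : ℂ)) *
              Polynomial.X ^ (n - 2 * d' - 2)) := by
  refine ⟨?_, ?_, ?_⟩
  · intro f
    simp only [Sop, map_add, map_mul, map_sub, map_neg, map_one, map_ofNat,
      Int.cast_natCast]
    ring
  · intro f
    simp only [Sop, map_add, map_mul, map_sub, map_neg, map_one, map_ofNat,
      Int.cast_natCast, Int.cast_sub, Int.cast_mul, Int.cast_ofNat]
    ring
  · intro h n d' hd
    have hl : (l : ℂ) = -(2 * μ) := by linear_combination h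
    have hnC : (n : ℂ) = ((n - 2 * d' : ℕ) : ℂ) + 2 * (d' : ℂ) := by
      rw [Nat.cast_sub hd]; push_cast; ring
    have hnZ : (n : ℤ) = ((n - 2 * d' : ℕ) : ℤ) + 2 * (d' : ℤ) := by omega
    have key := sop_aux μ l hl (n - 2 * d') d'
    rw [show μ - (n : ℂ) = μ - (((n - 2 * d' : ℕ) : ℂ) + 2 * (d' : ℂ)) by rw [← hnC],
      show (l : ℤ) + (n : ℤ) = (l : ℤ) + (((n - 2 * d' : ℕ) : ℤ) + 2 * (d' : ℤ)) by omega]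
    exact key

end
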